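/- arXiv:2412.00674 — 2 statements merged into one kernel-verified Lean document; each statement's English description precedes it below -/
import Mathlib

section
/- For every positive integer n, the sum over i = 0,...,n of sqrt( 2^{-n} * C(n,i) ) is at most (2*pi*n)^{1/4}. -/
/-!
Write `p i = C(n,i) / 2^n` and `w i = exp (-(2i - n)^2 / (4n))`. By Cauchy–Schwarz,
`∑ √(p i) ≤ √(∑ w i) · √(∑ p i / w i)`, and the two factors are bounded separately.

* `∑ w i ≤ √(πn)`: the full Gaussian sum over `ℤ` is `√(πn)` times a theta value
  `1 + O(e^{-π²n})` (Poisson summation), and the two omitted terms at `i = -1` and `i = n + 1`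
  are much larger than that error.
* `∑ p i / w i ≤ √2`: writing `exp (y² / (4n))` as a Gaussian integral of `exp (t y)` reduces
  this to the moment generating function `cosh t ^ n ≤ exp (n t² / 2)` of the binomial law.

The product is `(√(πn) · √2)^{1/2} = (2πn)^{1/4}`.
-/

open Real MeasureTheory Finset

lemma summable_exp_neg_mul_add_sq {a : ℝ} (ha : 0 < a) (r : ℝ) :
    Summable fun k : ℤ ↦ exp (-a * (k + r) ^ 2) := by
  have hτ : 0 < (Complex.I * (a / π : ℝ)).im := by simpa using div_pos ha pi_pos
  refine (((summable_jacobiTheta₂_term_iff (Complex.I * (a * r / π : ℝ)) _).2 hτ).norm.mul_left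
    (exp (-a * r ^ 2))).congr fun k ↦ ?_
  rw [norm_jacobiTheta₂_term, ← exp_add]
  congr 1
  simp only [Complex.mul_im, Complex.I_re, Complex.I_im, Complex.ofReal_re, Complex.ofReal_im]
  field_simp
  ring

lemma tsum_exp_neg_mul_add_sq_le {a : ℝ} (ha : 0 < a) (r : ℝ) :
    ∑' k : ℤ, exp (-π * a * (k + r) ^ 2) ≤ 1 / √a * ∑' k : ℤ, exp (-π / a * k ^ 2) := by
  -- Poisson summation moves the shift `r` into the unimodular phase `e^{-2πikr}`, which the
  -- triangle inequality then drops.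
  have hpoisson := Complex.tsum_exp_neg_quadratic (a := (a⁻¹ : ℝ)) (by simpa using ha)
    (-Complex.I * r)
  have hterm : ∀ k : ℤ, ‖Complex.exp (-π * (a⁻¹ : ℝ) * k ^ 2 + 2 * π * (-Complex.I * r) * k)‖
      = exp (-π / a * k ^ 2) := by
    intro k
    rw [Complex.norm_exp, show -π * (a⁻¹ : ℝ) * k ^ 2 + 2 * π * (-Complex.I * r) * k
      = ((-π / a * k ^ 2 : ℝ) : ℂ) + ((-2 * π * r * k : ℝ) : ℂ) * Complex.I by push_cast; ring]
    simp only [Complex.add_re, Complex.ofReal_re, Complex.re_ofReal_mul, Complex.I_re, mul_zero,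
      add_zero]
  have hsqrt : ((a⁻¹ : ℝ) : ℂ) ^ (1 / 2 : ℂ) = ((1 / √a : ℝ) : ℂ) := by
    rw [← Complex.ofReal_ofNat, ← Complex.ofReal_one, ← Complex.ofReal_div,
      ← Complex.ofReal_cpow (inv_nonneg.2 ha.le), ← sqrt_eq_rpow, sqrt_inv, one_div]
  have hshift : ∀ k : ℤ, Complex.exp (-π / (a⁻¹ : ℝ) * (k + Complex.I * (-Complex.I * r)) ^ 2)
      = (exp (-π * a * (k + r) ^ 2) : ℝ) := by
    intro k
    push_cast
    congr 1
    rw [div_inv_eq_mul, ← mul_assoc Complex.I, mul_neg, Complex.I_mul_I, neg_neg, one_mul]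
  simp_rw [hshift, hsqrt, ← Complex.ofReal_tsum] at hpoisson
  have hS : ((∑' k : ℤ, exp (-π * a * (k + r) ^ 2) : ℝ) : ℂ) = ((1 / √a : ℝ) : ℂ) *
      ∑' k : ℤ, Complex.exp (-π * (a⁻¹ : ℝ) * k ^ 2 + 2 * π * (-Complex.I * r) * k) := by
    rw [hpoisson, ← mul_assoc, mul_one_div_cancel (by simpa using (sqrt_pos.2 ha).ne'), one_mul]
  have hsummable : Summable fun k : ℤ ↦ exp (-π / a * k ^ 2) := by
    simpa [neg_div] using summable_exp_neg_mul_add_sq (div_pos pi_pos ha) 0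
  calc ∑' k : ℤ, exp (-π * a * (k + r) ^ 2)
      = ‖((∑' k : ℤ, exp (-π * a * (k + r) ^ 2) : ℝ) : ℂ)‖ :=
        (Complex.norm_of_nonneg (tsum_nonneg fun _ ↦ (exp_pos _).le)).symm
    _ ≤ 1 / √a * ∑' k : ℤ, exp (-π / a * k ^ 2) := by
        rw [hS, norm_mul, Complex.norm_of_nonneg (by positivity), ← tsum_congr hterm]
        gcongr
        exact norm_tsum_le_tsum_norm (hsummable.congr fun k ↦ (hterm k).symm)

lemma tsum_exp_neg_mul_int_sq_le {c : ℝ} (hc : 1 ≤ c) :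
    ∑' k : ℤ, exp (-c * k ^ 2) ≤ 1 + 4 * exp (-c) := by
  have hτ : 0 < (Complex.I * (c / π : ℝ)).im := by simpa using div_pos (by linarith) pi_pos
  have htheta : jacobiTheta (Complex.I * (c / π : ℝ)) = ((∑' k : ℤ, exp (-c * k ^ 2) : ℝ) : ℂ) := by
    rw [Complex.ofReal_tsum]
    refine tsum_congr fun k ↦ ?_
    push_cast
    congr 1
    field_simp
    ring_nf
    simp
  have hbound := norm_jacobiTheta_sub_one_le hτ
  have hq : exp (-c) < 1 / 2 := (exp_le_exp.2 (neg_le_neg hc)).trans_lt exp_neg_one_lt_half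
  rw [htheta, ← Complex.ofReal_one, ← Complex.ofReal_sub, Complex.norm_real,
    show -π * (Complex.I * (c / π : ℝ)).im = -c by simp; field_simp] at hbound
  calc ∑' k : ℤ, exp (-c * k ^ 2) ≤ 1 + ‖∑' k : ℤ, exp (-c * k ^ 2) - 1‖ := by
        rw [Real.norm_eq_abs]; linarith [le_abs_self (∑' k : ℤ, exp (-c * k ^ 2) - 1)]
    _ ≤ 1 + 2 / (1 - exp (-c)) * exp (-c) := by gcongr
    _ ≤ 1 + 4 * exp (-c) := by
        gcongr
        rw [div_le_iff₀ (by linarith)]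
        linarith

lemma neg_one_add_sum_range_add_le_tsum {f : ℤ → ℝ} (hf : Summable f) (hf0 : ∀ k, 0 ≤ f k)
    (m : ℕ) : f (-1) + ∑ i ∈ range m, f i + f m ≤ ∑' k, f k := by
  have hinj : Function.Injective fun j : ℕ ↦ (j : ℤ) - 1 := fun i j h ↦ by simpa using h
  calc f (-1) + ∑ i ∈ range m, f i + f m = ∑ j ∈ range (m + 2), f ((j : ℤ) - 1) := by
        rw [sum_range_succ, sum_range_succ']
        push_cast
        simp only [add_sub_cancel_right]
        ring1
    _ = ∑ k ∈ (range (m + 2)).map ⟨_, hinj⟩, f k := by rw [sum_map]; rfl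
    _ ≤ ∑' k, f k := hf.sum_le_tsum _ fun k _ ↦ hf0 k

lemma two_mul_sqrt_pi_mul_mul_exp_neg_pi_sq_mul_le {x : ℝ} (hx : 1 ≤ x) :
    2 * √(π * x) * exp (-(π ^ 2 * x)) ≤ exp (-((x + 2) ^ 2 / (4 * x))) := by
  have hsqrt : √(π * x) ≤ 2 * x :=
    sqrt_le_iff.2 ⟨by linarith, by nlinarith [pi_le_four]⟩
  have hexponent : -(x / 4 + 2) ≤ -((x + 2) ^ 2 / (4 * x)) := by
    rw [neg_le_neg_iff, div_le_iff₀ (by linarith)]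
    nlinarith
  have hgrowth : 4 * x ≤ exp (π ^ 2 * x - (x / 4 + 2)) := by
    have : 9 ≤ π ^ 2 := by nlinarith [pi_gt_three]
    nlinarith [add_one_le_exp (π ^ 2 * x - (x / 4 + 2))]
  calc 2 * √(π * x) * exp (-(π ^ 2 * x)) ≤ 4 * x * exp (-(π ^ 2 * x)) :=
        mul_le_mul_of_nonneg_right (by linarith) (exp_pos _).le
    _ ≤ exp (π ^ 2 * x - (x / 4 + 2)) * exp (-(π ^ 2 * x)) := by gcongr
    _ = exp (-(x / 4 + 2)) := by rw [← exp_add]; ring_nf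
    _ ≤ exp (-((x + 2) ^ 2 / (4 * x))) := exp_le_exp.2 hexponent

lemma sum_range_exp_neg_sq_div_le_sqrt_pi_mul (n : ℕ) (hn : 0 < n) :
    ∑ i ∈ range (n + 1), exp (-((2 * i - n) ^ 2 / (4 * n))) ≤ √(π * n) := by
  have hn1 : (1 : ℝ) ≤ n := by exact_mod_cast hn
  have hgauss : ∀ x : ℝ, -((2 * x - n) ^ 2 / (4 * n)) = -π * (π * n)⁻¹ * (x + -n / 2) ^ 2 :=
    fun x ↦ by field_simp; ring
  have htsum : ∑' k : ℤ, exp (-((2 * k - n) ^ 2 / (4 * n)))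
      ≤ √(π * n) * (1 + 4 * exp (-(π ^ 2 * n))) := by
    simp_rw [hgauss]
    refine (tsum_exp_neg_mul_add_sq_le (by positivity) _).trans ?_
    rw [one_div, sqrt_inv, inv_inv, div_inv_eq_mul]
    gcongr
    refine (tsum_congr fun k ↦ ?_).trans_le (tsum_exp_neg_mul_int_sq_le (c := π ^ 2 * n) ?_)
    · ring_nf
    · nlinarith [pi_gt_three]
  -- The terms at `k = -1` and `k = n + 1` lie outside the sum and absorb the theta error.
  have hpeel := neg_one_add_sum_range_add_le_tsum
    (f := fun k : ℤ ↦ exp (-((2 * k - n) ^ 2 / (4 * n))))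
    ((summable_exp_neg_mul_add_sq (a := π * (π * n)⁻¹) (by positivity) (-n / 2)).congr
      fun k ↦ by rw [hgauss]; ring_nf)
    (fun k ↦ (exp_pos _).le) (n + 1)
  have hleft : (2 * -1 - n : ℝ) ^ 2 = (n + 2) ^ 2 := by ring
  have hright : (2 * (n + 1) - n : ℝ) ^ 2 = (n + 2) ^ 2 := by ring
  push_cast at hpeel
  rw [hleft, hright] at hpeel
  linarith [two_mul_sqrt_pi_mul_mul_exp_neg_pi_sq_mul_le hn1]

lemma exp_neg_mul_sq_add_mul_eq {b : ℝ} (hb : 0 < b) (c x : ℝ) :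
    exp (-b * x ^ 2 + c * x) = exp (c ^ 2 / (4 * b)) * exp (-b * (x - c / (2 * b)) ^ 2) := by
  rw [← exp_add]
  congr 1
  field_simp
  ring

lemma integrable_exp_neg_mul_sq_add_mul {b : ℝ} (hb : 0 < b) (c : ℝ) :
    Integrable fun x : ℝ ↦ exp (-b * x ^ 2 + c * x) := by
  simp_rw [exp_neg_mul_sq_add_mul_eq hb]
  exact ((integrable_exp_neg_mul_sq hb).comp_sub_right _).const_mul _

lemma integral_exp_neg_mul_sq_add_mul {b : ℝ} (hb : 0 < b) (c : ℝ) :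
    ∫ x : ℝ, exp (-b * x ^ 2 + c * x) = √(π / b) * exp (c ^ 2 / (4 * b)) := by
  simp_rw [exp_neg_mul_sq_add_mul_eq hb]
  rw [integral_const_mul, integral_sub_right_eq_self (fun x ↦ exp (-b * x ^ 2)), integral_gaussian,
    mul_comm]

lemma sum_choose_div_two_pow_mul_exp (n : ℕ) (t : ℝ) :
    ∑ i ∈ range (n + 1), (n.choose i : ℝ) / 2 ^ n * exp (t * (2 * i - n)) = cosh t ^ n := by
  rw [cosh_eq, div_pow, add_pow, sum_div]
  refine sum_congr rfl fun i hi ↦ ?_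
  rw [← exp_nat_mul, ← exp_nat_mul, ← exp_add, Nat.cast_sub (Nat.lt_succ_iff.1 (mem_range.1 hi))]
  ring_nf

lemma sum_choose_div_two_pow_mul_exp_le (n : ℕ) (t : ℝ) :
    ∑ i ∈ range (n + 1), (n.choose i : ℝ) / 2 ^ n * exp (t * (2 * i - n))
      ≤ exp (n * t ^ 2 / 2) := by
  rw [sum_choose_div_two_pow_mul_exp, mul_div_assoc, exp_nat_mul]
  exact pow_le_pow_left₀ (cosh_pos t).le (cosh_le_exp_half_sq t) n

lemma sum_mul_exp_mul_sq_le_of_mgf_le {ι : Type*} (s : Finset ι) (p c : ι → ℝ) {v l : ℝ} (hl : 0 < l)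
    (hlv : 2 * l * v < 1) (hmgf : ∀ t, ∑ i ∈ s, p i * exp (t * c i) ≤ exp (v * t ^ 2 / 2)) :
    ∑ i ∈ s, p i * exp (l * c i ^ 2) ≤ 1 / √(1 - 2 * l * v) := by
  set b := 1 / (4 * l) with hb
  have hb0 : 0 < b := by positivity
  have hbv : 0 < b - v / 2 := by rw [hb]; field_simp; linarith
  -- Hubbard–Stratonovich: `exp (l y²)` is a Gaussian average of `exp (t y)`.
  have hHS : ∀ y, exp (l * y ^ 2) = (√(π / b))⁻¹ * ∫ t : ℝ, exp (-b * t ^ 2 + y * t) := fun y ↦ by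
    rw [integral_exp_neg_mul_sq_add_mul hb0, ← mul_assoc, inv_mul_cancel₀ (by positivity),
      one_mul, hb]
    congr 1
    field_simp
  have hint : ∀ i ∈ s, Integrable fun t : ℝ ↦ p i * exp (-b * t ^ 2 + c i * t) :=
    fun i _ ↦ (integrable_exp_neg_mul_sq_add_mul hb0 _).const_mul _
  have hpt : ∀ t : ℝ, ∑ i ∈ s, p i * exp (-b * t ^ 2 + c i * t) ≤ exp (-(b - v / 2) * t ^ 2) := by
    intro t
    calc ∑ i ∈ s, p i * exp (-b * t ^ 2 + c i * t)
        = exp (-b * t ^ 2) * ∑ i ∈ s, p i * exp (t * c i) := by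
          rw [mul_sum]
          exact sum_congr rfl fun i _ ↦ by rw [exp_add, mul_comm t]; ring
      _ ≤ exp (-b * t ^ 2) * exp (v * t ^ 2 / 2) := by gcongr; exact hmgf t
      _ = exp (-(b - v / 2) * t ^ 2) := by rw [← exp_add]; ring_nf
  calc ∑ i ∈ s, p i * exp (l * c i ^ 2)
      = (√(π / b))⁻¹ * ∫ t : ℝ, ∑ i ∈ s, p i * exp (-b * t ^ 2 + c i * t) := by
        rw [integral_finsetSum s hint, mul_sum]
        refine sum_congr rfl fun i _ ↦ ?_
        rw [hHS, integral_const_mul]; ring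
    _ ≤ (√(π / b))⁻¹ * ∫ t : ℝ, exp (-(b - v / 2) * t ^ 2) := by
        refine mul_le_mul_of_nonneg_left ?_ (by positivity)
        exact integral_mono (integrable_finsetSum s hint) (integrable_exp_neg_mul_sq hbv) hpt
    _ = 1 / √(1 - 2 * l * v) := by
        rw [integral_gaussian, ← sqrt_inv, ← sqrt_mul (by positivity), one_div, ← sqrt_inv]
        congr 1
        have hlv' : 1 - l * v * 2 ≠ 0 := by linarith
        rw [hb]
        field_simp
        rw [div_eq_one_iff_eq (by linarith)]
        ring

lemma sum_sqrt_le_sqrt_sum_exp_neg_mul_sqrt_sum_mul_exp {ι : Type*} (s : Finset ι) (p u : ι → ℝ)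
    (hp : ∀ i, 0 ≤ p i) :
    ∑ i ∈ s, √(p i) ≤ √(∑ i ∈ s, exp (-u i)) * √(∑ i ∈ s, p i * exp (u i)) := by
  refine le_of_eq_of_le (sum_congr rfl fun i _ ↦ ?_)
    (sum_sqrt_mul_sqrt_le s (fun i ↦ (exp_pos _).le) fun i ↦ mul_nonneg (hp i) (exp_pos _).le)
  rw [← sqrt_mul (exp_pos _).le, mul_left_comm, ← exp_add, neg_add_cancel, exp_zero, mul_one]

/-- The sum over `i = 0,...,n` of the square roots of the binomial probabilities
`2^(-n) * C(n,i)` is at most `(2πn)^(1/4)`. -/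
theorem sum_sqrt_binomial_le (n : ℕ) (hn : 0 < n) :
    ∑ i ∈ Finset.range (n+1), Real.sqrt ((n.choose i : ℝ) / 2^n)
      ≤ (2 * Real.pi * n) ^ ((1:ℝ)/4) := by
  have hn' : (0 : ℝ) < n := by exact_mod_cast hn
  have hmoment : ∑ i ∈ range (n + 1), (n.choose i : ℝ) / 2 ^ n * exp ((2 * i - n) ^ 2 / (4 * n))
      ≤ √2 := by
    have := sum_mul_exp_mul_sq_le_of_mgf_le (range (n + 1)) _ (fun i ↦ 2 * i - n) (l := 1 / (4 * n))
      (by positivity) (by field_simp; norm_num) (sum_choose_div_two_pow_mul_exp_le n)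
    convert this using 4 with i
    · ring1
    · field_simp; norm_num
  calc ∑ i ∈ range (n + 1), √((n.choose i : ℝ) / 2 ^ n)
      ≤ √(∑ i ∈ range (n + 1), exp (-((2 * i - n) ^ 2 / (4 * n)))) *
          √(∑ i ∈ range (n + 1), (n.choose i : ℝ) / 2 ^ n * exp ((2 * i - n) ^ 2 / (4 * n))) :=
        sum_sqrt_le_sqrt_sum_exp_neg_mul_sqrt_sum_mul_exp _ _ _ fun i ↦ by positivity
    _ ≤ √(√(π * n)) * √(√2) := by gcongr; exact sum_range_exp_neg_sq_div_le_sqrt_pi_mul n hn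
    _ = (2 * π * n) ^ ((1 : ℝ) / 4) := by
        rw [← sqrt_mul (by positivity), ← sqrt_mul (by positivity), sqrt_eq_rpow, sqrt_eq_rpow,
          ← rpow_mul (by positivity)]
        ring_nf
end

section
/- Let n be a positive integer and alpha > 0 satisfy alpha * 2^{-n} * C(n,i) <= 1 for all i in {0,...,n}. Let P be the product distribution on {0,1}^{n+1} in which bit i equals 1 independently with probability S_e(i). Then: (1) the number of strings x in {0,1}^{n+1} with P(x) >= e^{-sqrt(n)/2} is at most e^{sqrt(n)/2}; and (2) the total probability mass of strings x with P(x) < e^{-sqrt(n)/2} is at most e^{ sqrt(alpha)*(2*pi*n)^{1/4} - sqrt(n)/4 }. By symmetry the same bounds hold with S_e replaced by S_o. -/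
/-- The binomial probability `bin n p k = C(n,k) p^k (1-p)^(n-k)` (here `C(n,k) = 0`
for `k > n`, so the value is `0` out of range). -/
noncomputable def bin (n : ℕ) (p : ℝ) (k : ℕ) : ℝ :=
  (n.choose k : ℝ) * p^k * (1-p)^(n-k)

/-- The length-`(n+1)` string of probabilities `S_e`, nonzero on even indices:
`S_e(i) = α bin(n,1/2,i)` for even `i`, and `0` for odd `i`. -/
noncomputable def Se (n : ℕ) (α : ℝ) : Fin (n+1) → ℝ :=
  fun i => if Even i.val then α * bin n (1/2) i.val else 0

/-- The length-`(n+1)` string of probabilities `S_o`, nonzero on odd indices: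
`S_o(i) = α bin(n,1/2,i)` for odd `i`, and `0` for even `i`. -/
noncomputable def So (n : ℕ) (α : ℝ) : Fin (n+1) → ℝ :=
  fun i => if Even i.val then 0 else α * bin n (1/2) i.val

/-- The probability assigned to the binary string `x : Fin m → Bool` by the product
distribution in which bit `i` equals `1` independently with probability `S i`. -/
noncomputable def prodP {m : ℕ} (S : Fin m → ℝ) (x : Fin m → Bool) : ℝ :=
  ∏ i, if x i then S i else 1 - S i

/-!
Strings with `P(x) ≥ t` number at most `1/t` (Markov). A string with `P(x) < t` has
`P(x) ≤ √t · √P(x)`, and `∑ₓ √P(x) = ∏ᵢ (√Sᵢ + √(1 - Sᵢ)) ≤ exp (∑ᵢ √Sᵢ)`, so everything reduces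
to `∑_{i ≡ p (mod 2)} √(C(n,i) / 2ⁿ) ≤ (2πn)^{1/4}`. For `n ≤ 80` this is Cauchy–Schwarz over the
parity class, which has about `n/2` elements and mass `1/2`. For larger `n` apply Cauchy–Schwarz
with the weights `exp (± |2i - n| / √n)`: the binomial side is at most `2 cosh (1/√n)ⁿ ≤ 2√e`,
and on a parity class `|2i - n|` runs through two progressions of step `4`, so the other side is
bounded by two geometric series of ratio `exp (-4/√n)`. The product is at most `√e (√n + 4)`, which
is below `√(2πn)` once `n ≥ 81`.
-/

open Finset Real

lemma sum_prod_bool {ι : Type*} [Fintype ι] [DecidableEq ι] (f : ι → Bool → ℝ) :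
    ∑ x : ι → Bool, ∏ i, f i (x i) = ∏ i, (f i true + f i false) := by
  rw [← Fintype.prod_sum]
  simp [add_comm]

section ProductDistribution

variable {m : ℕ} {S : Fin m → ℝ}

lemma sum_prodP (S : Fin m → ℝ) : ∑ x, prodP S x = 1 := by
  simp [prodP, sum_prod_bool (fun i b => if b then S i else 1 - S i)]

lemma prodP_nonneg (h0 : ∀ i, 0 ≤ S i) (h1 : ∀ i, S i ≤ 1) (x : Fin m → Bool) :
    0 ≤ prodP S x :=
  prod_nonneg fun i _ => by cases x i <;> simp [h0 i, h1 i]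

lemma sum_sqrt_prodP (h0 : ∀ i, 0 ≤ S i) (h1 : ∀ i, S i ≤ 1) :
    ∑ x, √(prodP S x) = ∏ i, (√(S i) + √(1 - S i)) := by
  calc ∑ x, √(prodP S x) = ∑ x : Fin m → Bool, ∏ i, √(if x i then S i else 1 - S i) := by
        refine sum_congr rfl fun x _ => sqrt_prod _ fun i _ => ?_
        cases x i <;> simp [h0 i, h1 i]
    _ = ∏ i, (√(S i) + √(1 - S i)) := by
        simp [sum_prod_bool (fun i b => √(if b then S i else 1 - S i))]

lemma sum_sqrt_prodP_le_exp (h0 : ∀ i, 0 ≤ S i) (h1 : ∀ i, S i ≤ 1) :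
    ∑ x, √(prodP S x) ≤ exp (∑ i, √(S i)) := by
  rw [sum_sqrt_prodP h0 h1, exp_sum]
  gcongr with i
  calc √(S i) + √(1 - S i) ≤ √(S i) + 1 := by
        gcongr; exact sqrt_le_one.mpr (by linarith [h0 i])
    _ ≤ exp √(S i) := by linarith [add_one_le_exp √(S i)]

lemma card_filter_le_prodP_le_inv (h0 : ∀ i, 0 ≤ S i) (h1 : ∀ i, S i ≤ 1) {t : ℝ} (ht : 0 < t) :
    (#{x | t ≤ prodP S x} : ℝ) ≤ t⁻¹ := by
  have hmass : #{x | t ≤ prodP S x} • t ≤ ∑ x with t ≤ prodP S x, prodP S x :=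
    card_nsmul_le_sum _ _ _ fun x hx => (mem_filter.mp hx).2
  have htotal : ∑ x with t ≤ prodP S x, prodP S x ≤ 1 := by
    rw [← sum_prodP S]
    exact sum_le_sum_of_subset_of_nonneg (filter_subset _ _)
      fun x _ _ => prodP_nonneg h0 h1 x
  rw [nsmul_eq_mul] at hmass
  rw [← one_div, le_div_iff₀ ht]
  linarith

lemma sum_filter_prodP_lt_le (h0 : ∀ i, 0 ≤ S i) (h1 : ∀ i, S i ≤ 1) {t : ℝ} :
    ∑ x with prodP S x < t, prodP S x ≤ √t * exp (∑ i, √(S i)) := by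
  calc ∑ x with prodP S x < t, prodP S x
      ≤ ∑ x with prodP S x < t, √t * √(prodP S x) := by
        refine sum_le_sum fun x hx => ?_
        have hP := prodP_nonneg h0 h1 x
        calc prodP S x = √(prodP S x) * √(prodP S x) := (mul_self_sqrt hP).symm
          _ ≤ √t * √(prodP S x) := by gcongr; exact (mem_filter.mp hx).2.le
    _ ≤ ∑ x, √t * √(prodP S x) := sum_le_sum_of_subset_of_nonneg (filter_subset _ _)
        fun _ _ _ => by positivity
    _ ≤ √t * exp (∑ i, √(S i)) := by
        rw [← mul_sum]; gcongr; exact sum_sqrt_prodP_le_exp h0 h1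

end ProductDistribution

lemma bin_half (n j : ℕ) : bin n (1/2) j = n.choose j * (1/2) ^ n := by
  rcases le_or_gt j n with h | h
  · rw [bin, show (1:ℝ) - 1/2 = 1/2 by norm_num, mul_assoc, ← pow_add, Nat.add_sub_cancel' h]
  · simp [bin, Nat.choose_eq_zero_of_lt h]

lemma sum_choose_parity {n p : ℕ} (hn : n ≠ 0) (hp : p < 2) :
    ∑ i ∈ range (n + 1) with i % 2 = p, (n.choose i : ℝ) * (1/2) ^ n = 1/2 := by
  have hind : ∀ i, (if i % 2 = p then (1:ℝ) else 0) = (1 + (-1) ^ p * (-1) ^ i) / 2 := by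
    intro i
    rw [← pow_add, neg_one_pow_eq_pow_mod_two]
    interval_cases p <;> rcases Nat.mod_two_eq_zero_or_one i with h | h <;>
      simp [h, Nat.add_mod]
  have htotal : ∑ i ∈ range (n + 1), (n.choose i : ℝ) = 2 ^ n := by
    exact_mod_cast Nat.sum_range_choose n
  have halt : ∑ i ∈ range (n + 1), (-1 : ℝ) ^ i * n.choose i = 0 := by
    exact_mod_cast Int.alternating_sum_range_choose_of_ne hn
  calc ∑ i ∈ range (n + 1) with i % 2 = p, (n.choose i : ℝ) * (1/2) ^ n
      = ∑ i ∈ range (n + 1), (if i % 2 = p then (1:ℝ) else 0) * (n.choose i * (1/2) ^ n) := by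
        rw [sum_filter]; exact sum_congr rfl fun i _ => by split_ifs <;> simp
    _ = (1/2) ^ n / 2 * (∑ i ∈ range (n + 1), (n.choose i : ℝ)
          + (-1) ^ p * ∑ i ∈ range (n + 1), (-1 : ℝ) ^ i * n.choose i) := by
        simp only [hind, mul_sum, ← sum_add_distrib]
        exact sum_congr rfl fun i _ => by ring
    _ = 1/2 := by rw [htotal, halt]; field_simp; simp

lemma card_parity_le (n p : ℕ) : (#{i ∈ range (n + 1) | i % 2 = p} : ℝ) ≤ (n + 2) / 2 := by
  have hmaps : ∀ i ∈ {i ∈ range (n + 1) | i % 2 = p}, i / 2 ∈ range (n / 2 + 1) := by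
    intro i hi
    simp only [mem_filter, mem_range] at hi ⊢
    omega
  have hinj : Set.InjOn (· / 2) ({i ∈ range (n + 1) | i % 2 = p} : Finset ℕ) := by
    intro i hi j hj hij
    simp only [coe_filter, mem_range, Set.mem_ofPred_eq] at hi hj hij
    omega
  have hcard := card_le_card_of_injOn _ hmaps hinj
  rw [card_range] at hcard
  have : ((n / 2 + 1 : ℕ) : ℝ) ≤ (n + 2) / 2 := by
    rw [le_div_iff₀ two_pos]; exact_mod_cast (by omega : (n / 2 + 1) * 2 ≤ n + 2)
  exact le_trans (by exact_mod_cast hcard) this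

lemma sum_choose_mul_exp_eq_cosh_pow (n : ℕ) (μ : ℝ) :
    ∑ i ∈ range (n + 1), n.choose i * (1/2) ^ n * exp (μ * (2 * (i : ℝ) - n)) = cosh μ ^ n := by
  rw [cosh_eq, add_div, add_pow]
  refine sum_congr rfl fun i hi => ?_
  have hi : i ≤ n := Nat.lt_succ_iff.mp (mem_range.mp hi)
  have hhalf : (1/2 : ℝ) ^ n = (1/2) ^ i * (1/2) ^ (n - i) := by
    rw [← pow_add, Nat.add_sub_cancel' hi]
  simp only [hhalf, div_pow, ← exp_nat_mul, Nat.cast_sub hi]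
  rw [show μ * (2 * (i : ℝ) - n) = i * μ + (n - i) * -μ by ring, exp_add]
  ring

lemma sum_choose_mul_exp_abs_le (n : ℕ) (μ : ℝ) :
    ∑ i ∈ range (n + 1), n.choose i * (1/2) ^ n * exp (μ * |2 * (i : ℝ) - n|) ≤ 2 * cosh μ ^ n := by
  have hexp_abs : ∀ a : ℝ, exp (μ * |a|) ≤ exp (μ * a) + exp (-μ * a) := by
    intro a
    rcases abs_choice a with h | h <;> rw [h]
    · linarith [exp_pos (-μ * a)]
    · rw [mul_neg, ← neg_mul]; linarith [exp_pos (μ * a)]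
  calc ∑ i ∈ range (n + 1), n.choose i * (1/2) ^ n * exp (μ * |2 * (i : ℝ) - n|)
      ≤ ∑ i ∈ range (n + 1), (n.choose i * (1/2) ^ n * exp (μ * (2 * (i : ℝ) - n))
          + n.choose i * (1/2) ^ n * exp (-μ * (2 * (i : ℝ) - n))) := by
        gcongr with i
        rw [← mul_add]
        gcongr
        exact hexp_abs _
    _ = 2 * cosh μ ^ n := by
        rw [sum_add_distrib, sum_choose_mul_exp_eq_cosh_pow, sum_choose_mul_exp_eq_cosh_pow,
          cosh_neg, two_mul]

lemma sum_pow_le_of_injOn {ι : Type*} {r : ℝ} (h0 : 0 ≤ r) (h1 : r < 1) {s : Finset ι}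
    {k : ι → ℕ} (hk : Set.InjOn k s) : ∑ i ∈ s, r ^ k i ≤ (1 - r)⁻¹ := by
  classical
  rw [← sum_image hk, ← tsum_geometric_of_lt_one h0 h1]
  exact (summable_geometric_of_lt_one h0 h1).sum_le_tsum _ fun i _ => pow_nonneg h0 i

lemma sum_exp_neg_le_of_injOn {ι : Type*} {μ : ℝ} (hμ : 0 < μ) {s : Finset ι} {d : ι → ℝ}
    {k : ι → ℕ} (hk : Set.InjOn k s) (hd : ∀ i ∈ s, 4 * (k i : ℝ) ≤ d i) :
    ∑ i ∈ s, exp (-(μ * d i)) ≤ (1 - exp (-(4 * μ)))⁻¹ := by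
  refine le_trans (sum_le_sum fun i hi => ?_)
    (sum_pow_le_of_injOn (exp_pos _).le (exp_lt_one_iff.mpr (by linarith)) hk)
  rw [← exp_nat_mul, exp_le_exp]
  nlinarith [hd i hi]

lemma sum_exp_neg_abs_le_of_mod_two_eq (n : ℕ) {μ : ℝ} (hμ : 0 < μ) {F : Finset ℕ}
    (hF : ∀ i ∈ F, ∀ j ∈ F, i % 2 = j % 2) :
    ∑ i ∈ F, exp (-(μ * |2 * (i : ℝ) - n|)) ≤ 2 * (1 - exp (-(4 * μ)))⁻¹ := by
  set k : ℕ → ℕ := fun i => (2 * (i : ℤ) - n).natAbs / 4 with hk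
  have hkd : ∀ i, 4 * (k i : ℝ) ≤ |2 * (i : ℝ) - n| := by
    intro i
    have h4 : 4 * k i ≤ (2 * (i : ℤ) - n).natAbs := Nat.mul_div_le _ 4
    calc 4 * (k i : ℝ) ≤ ((2 * (i : ℤ) - n).natAbs : ℝ) := by exact_mod_cast h4
      _ = |2 * (i : ℝ) - n| := by rw [Nat.cast_natAbs]; push_cast; rfl
  rw [← sum_filter_add_sum_filter_not F (fun i => 2 * i ≤ n), two_mul]
  -- on either side of `n / 2`, equal parity puts the values `|2i - n|` in one class mod `4`
  gcongr <;>
  · refine sum_exp_neg_le_of_injOn hμ (k := k) (fun i hi j hj hij => ?_) fun i _ => hkd i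
    simp only [coe_filter, Set.mem_ofPred_eq, hk] at hi hj hij
    have := hF i hi.1 j hj.1
    omega

lemma inv_one_sub_exp_neg_le {x : ℝ} (hx : 0 < x) : (1 - exp (-x))⁻¹ ≤ (1 + x) / x := by
  have hle : exp (-x) ≤ (1 + x)⁻¹ := by
    rw [exp_neg]
    exact inv_anti₀ (by linarith) (by linarith [add_one_le_exp x])
  have hpos : 0 < 1 - exp (-x) := by linarith [exp_lt_one_iff.mpr (neg_lt_zero.mpr hx)]
  rw [inv_le_comm₀ hpos (by positivity), inv_div, div_le_iff₀ (by positivity)]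
  have : (1 + x)⁻¹ * (1 + x) = 1 := inv_mul_cancel₀ (by positivity)
  nlinarith

section SqrtBinomial

variable {n p : ℕ}

lemma sq_sum_sqrt_choose_parity_le_of_le (hn : 0 < n) (hn80 : n ≤ 80) (hp : p < 2) :
    (∑ i ∈ range (n + 1) with i % 2 = p, √(n.choose i * (1/2) ^ n)) ^ 2 ≤ √(2 * π * n) := by
  have hcs := sum_sq_le_sum_mul_sum_of_sq_le_mul {i ∈ range (n + 1) | i % 2 = p}
    (r := fun i => √(n.choose i * (1/2) ^ n)) (f := fun _ => (1 : ℝ))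
    (g := fun i => n.choose i * (1/2) ^ n) (fun _ _ => zero_le_one) (fun _ _ => by positivity)
    (fun i _ => by rw [one_mul, sq_sqrt (by positivity)])
  simp only [sum_const, nsmul_eq_mul, mul_one, sum_choose_parity hn.ne' hp] at hcs
  have hn1 : (1 : ℝ) ≤ n := by exact_mod_cast hn
  have hn80' : (n : ℝ) ≤ 80 := by exact_mod_cast hn80
  calc _ ≤ #{i ∈ range (n + 1) | i % 2 = p} * (1/2 : ℝ) := hcs
    _ ≤ (n + 2) / 2 * (1/2) := by gcongr; exact card_parity_le n p
    _ ≤ √(2 * π * n) := by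
        rw [le_sqrt (by positivity) (by positivity)]
        nlinarith [pi_gt_three]

lemma sq_sum_sqrt_choose_parity_le_of_ge (hn81 : 81 ≤ n) :
    (∑ i ∈ range (n + 1) with i % 2 = p, √(n.choose i * (1/2) ^ n)) ^ 2 ≤ √(2 * π * n) := by
  set s := √(n : ℝ) with hs
  have hs9 : 9 ≤ s := by
    rw [show (9 : ℝ) = √81 by rw [show (81 : ℝ) = 9 ^ 2 by norm_num, sqrt_sq (by norm_num)]]
    exact sqrt_le_sqrt (by exact_mod_cast hn81)
  have hμ : 0 < s⁻¹ := by positivity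
  have hnμ : (n : ℝ) * (s⁻¹ ^ 2 / 2) = 1/2 := by
    rw [inv_pow, hs, sq_sqrt (Nat.cast_nonneg n)]
    field_simp
  have hcosh : cosh s⁻¹ ^ n ≤ exp (1/2) := by
    calc cosh s⁻¹ ^ n ≤ exp (s⁻¹ ^ 2 / 2) ^ n := by gcongr; exact cosh_le_exp_half_sq _
      _ = exp (1/2) := by rw [← exp_nat_mul, hnμ]
  have hexp_half : exp (1/2) ≤ 5/3 := by
    have : exp (1/2) * exp (1/2) = exp 1 := by rw [← exp_add]; norm_num
    nlinarith [exp_one_lt_d9, exp_pos (1/2)]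
  have hsqrt_two_pi : 5/2 ≤ √(2 * π) := by
    rw [le_sqrt (by norm_num) (by positivity)]
    nlinarith [pi_gt_d2]
  calc (∑ i ∈ range (n + 1) with i % 2 = p, √(n.choose i * (1/2) ^ n)) ^ 2
      ≤ (∑ i ∈ range (n + 1) with i % 2 = p,
            n.choose i * (1/2) ^ n * exp (s⁻¹ * |2 * (i : ℝ) - n|))
          * ∑ i ∈ range (n + 1) with i % 2 = p, exp (-(s⁻¹ * |2 * (i : ℝ) - n|)) := by
        refine sum_sq_le_sum_mul_sum_of_sq_le_mul _ (fun _ _ => by positivity)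
          (fun _ _ => by positivity) fun i _ => ?_
        rw [sq_sqrt (by positivity), mul_assoc, ← exp_add, add_neg_cancel, exp_zero, mul_one]
    _ ≤ (2 * cosh s⁻¹ ^ n) * (2 * (1 - exp (-(4 * s⁻¹)))⁻¹) := by
        gcongr
        · exact le_trans (sum_le_sum_of_subset_of_nonneg (filter_subset _ _)
            fun _ _ _ => by positivity) (sum_choose_mul_exp_abs_le n _)
        · exact sum_exp_neg_abs_le_of_mod_two_eq n hμ fun i hi j hj => by
            rw [(mem_filter.mp hi).2, (mem_filter.mp hj).2]
    _ ≤ (2 * exp (1/2)) * (2 * ((1 + 4 * s⁻¹) / (4 * s⁻¹))) := by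
        have hμ4 : 0 < 4 * s⁻¹ := by positivity
        have hgeom_pos : 0 < 1 - exp (-(4 * s⁻¹)) := by
          linarith [exp_lt_one_iff.mpr (neg_lt_zero.mpr hμ4)]
        gcongr
        exact inv_one_sub_exp_neg_le hμ4
    _ = exp (1/2) * (s + 4) := by field_simp; ring
    _ ≤ √(2 * π) * s := by nlinarith
    _ = √(2 * π * n) := by rw [hs, ← sqrt_mul (by positivity)]

lemma sum_sqrt_choose_parity_le (hn : 0 < n) (hp : p < 2) :
    ∑ i ∈ range (n + 1) with i % 2 = p, √(n.choose i * (1/2) ^ n) ≤ (2 * π * n) ^ (1/4 : ℝ) := by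
  have hsq : (2 * π * n) ^ (1/4 : ℝ) = √√(2 * π * n) := by
    rw [sqrt_eq_rpow, sqrt_eq_rpow, ← rpow_mul (by positivity)]
    norm_num
  rw [hsq, le_sqrt (sum_nonneg fun _ _ => sqrt_nonneg _) (sqrt_nonneg _)]
  rcases le_or_gt n 80 with hn80 | hn81
  · exact sq_sum_sqrt_choose_parity_le_of_le hn hn80 hp
  · exact sq_sum_sqrt_choose_parity_le_of_ge hn81

end SqrtBinomial

lemma rare_strings_of_sum_sqrt_le {m : ℕ} {S : Fin m → ℝ} (h0 : ∀ i, 0 ≤ S i)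
    (h1 : ∀ i, S i ≤ 1) {c : ℝ} (hc : ∑ i, √(S i) ≤ c) (a : ℝ) :
    (#{x | exp (-a / 2) ≤ prodP S x} : ℝ) ≤ exp (a / 2) ∧
      ∑ x with prodP S x < exp (-a / 2), prodP S x ≤ exp (c - a / 4) := by
  constructor
  · simpa [← exp_neg, neg_div] using card_filter_le_prodP_le_inv h0 h1 (exp_pos (-a / 2))
  · calc ∑ x with prodP S x < exp (-a / 2), prodP S x
        ≤ √(exp (-a / 2)) * exp (∑ i, √(S i)) := sum_filter_prodP_lt_le h0 h1
      _ ≤ √(exp (-a / 2)) * exp c := by gcongr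
      _ = exp (c - a / 4) := by rw [sqrt_eq_rpow, ← exp_mul, ← exp_add]; ring_nf

section ParityString

variable {n p : ℕ} {α : ℝ}

noncomputable def parityBin (n : ℕ) (α : ℝ) (p : ℕ) : Fin (n + 1) → ℝ :=
  fun i => if i.val % 2 = p then α * bin n (1/2) i else 0

lemma Se_eq_parityBin (n : ℕ) (α : ℝ) : Se n α = parityBin n α 0 := by
  funext i
  simp [Se, parityBin, Nat.even_iff]

lemma So_eq_parityBin (n : ℕ) (α : ℝ) : So n α = parityBin n α 1 := by
  funext i
  rcases Nat.mod_two_eq_zero_or_one i.val with h | h <;> simp [So, parityBin, Nat.even_iff, h]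

lemma parityBin_nonneg (hα : 0 ≤ α) (i : Fin (n + 1)) : 0 ≤ parityBin n α p i := by
  unfold parityBin
  split_ifs
  · rw [bin_half]; positivity
  · rfl

lemma parityBin_le_one (hle : ∀ i : ℕ, i ≤ n → α * bin n (1/2) i ≤ 1) (i : Fin (n + 1)) :
    parityBin n α p i ≤ 1 := by
  unfold parityBin
  split_ifs
  · exact hle i (Nat.lt_succ_iff.mp i.isLt)
  · exact zero_le_one

lemma sum_sqrt_parityBin_le (hn : 0 < n) (hα : 0 ≤ α) (hp : p < 2) :
    ∑ i, √(parityBin n α p i) ≤ √α * (2 * π * n) ^ (1/4 : ℝ) := by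
  calc ∑ i, √(parityBin n α p i)
      = ∑ i ∈ range (n + 1), √(if i % 2 = p then α * bin n (1/2) i else 0) :=
        Fin.sum_univ_eq_sum_range (fun i => √(if i % 2 = p then α * bin n (1/2) i else 0)) _
    _ = √α * ∑ i ∈ range (n + 1) with i % 2 = p, √(n.choose i * (1/2) ^ n) := by
        rw [mul_sum, sum_filter]
        refine sum_congr rfl fun i _ => ?_
        split_ifs
        · rw [bin_half, sqrt_mul hα]
        · exact sqrt_zero
    _ ≤ √α * (2 * π * n) ^ (1/4 : ℝ) := by gcongr; exact sum_sqrt_choose_parity_le hn hp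

end ParityString

/-- If `α bin(n,1/2,i) ≤ 1` for all `i`, then for the product distribution `P`
induced by `S_e` on `{0,1}^{n+1}`: (1) the number of strings with `P(x) ≥ e^{-√n/2}`
is at most `e^{√n/2}`, and (2) the total mass of strings with `P(x) < e^{-√n/2}` is
at most `e^{√α (2πn)^{1/4} - √n/4}`. By symmetry the same holds for `S_o`. -/
theorem rare_strings_bound (n : ℕ) (hn : 0 < n) (α : ℝ) (hα : 0 < α)
    (hle : ∀ i : ℕ, i ≤ n → α * bin n (1/2) i ≤ 1) :
    (((Finset.univ.filter (fun x : Fin (n+1) → Bool =>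
          Real.exp (-Real.sqrt n / 2) ≤ prodP (Se n α) x)).card : ℝ)
        ≤ Real.exp (Real.sqrt n / 2)) ∧
    ((∑ x ∈ Finset.univ.filter (fun x : Fin (n+1) → Bool =>
          prodP (Se n α) x < Real.exp (-Real.sqrt n / 2)), prodP (Se n α) x)
        ≤ Real.exp (Real.sqrt α * (2 * Real.pi * n) ^ ((1:ℝ)/4) - Real.sqrt n / 4)) ∧
    (((Finset.univ.filter (fun x : Fin (n+1) → Bool =>
          Real.exp (-Real.sqrt n / 2) ≤ prodP (So n α) x)).card : ℝ)
        ≤ Real.exp (Real.sqrt n / 2)) ∧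
    ((∑ x ∈ Finset.univ.filter (fun x : Fin (n+1) → Bool =>
          prodP (So n α) x < Real.exp (-Real.sqrt n / 2)), prodP (So n α) x)
        ≤ Real.exp (Real.sqrt α * (2 * Real.pi * n) ^ ((1:ℝ)/4) - Real.sqrt n / 4)) := by
  have hSe := rare_strings_of_sum_sqrt_le (parityBin_nonneg hα.le) (parityBin_le_one hle)
    (sum_sqrt_parityBin_le hn hα.le (p := 0) (by norm_num)) √n
  have hSo := rare_strings_of_sum_sqrt_le (parityBin_nonneg hα.le) (parityBin_le_one hle)
    (sum_sqrt_parityBin_le hn hα.le (p := 1) (by norm_num)) √n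
  rw [Se_eq_parityBin, So_eq_parityBin]
  exact ⟨hSe.1, hSe.2, hSo.1, hSo.2⟩
end
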